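/- arXiv:1501.05268 — 14 statements merged into one kernel-verified Lean document; each statement's English description precedes it below -/
import Mathlib

section
/- Lemma 2.2: Let X be a set and h_1,…,h_r : X → ℝ fixed functions whose ranges are pairwise disjoint, i.e., h_i(X) ∩ h_j(X) = ∅ for all i ≠ j. Then a function f : X → ℝ belongs to B(h_1,…,h_r;X) if and only if G_{p,λ}(f) = 0 for every closed path–vector pair ⟨p,λ⟩ of X. -/
open scoped Classical

/-- `⟨p, lam⟩` is a closed path–vector pair with respect to the functions `h i`:
`p` is a nonempty finite set of (distinct) points, the weights `lam` are nonzero on `p`,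
and for every index `i` and every value `t`, the weights over the level set
`{x ∈ p | h i x = t}` sum to zero. -/
def ClosedPathPair {α : Type*} {r : ℕ} (h : Fin r → α → ℝ)
    (p : Finset α) (lam : α → ℝ) : Prop :=
  p.Nonempty ∧ (∀ x ∈ p, lam x ≠ 0) ∧
    ∀ (i : Fin r) (t : ℝ), ∑ x ∈ p.filter (fun x => h i x = t), lam x = 0

/-- `p` is a closed path with respect to the functions `h i`. -/
def IsClosedPath {α : Type*} {r : ℕ} (h : Fin r → α → ℝ) (p : Finset α) : Prop :=
  ∃ lam : α → ℝ, ClosedPathPair h p lam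

/-- `p` is a minimal closed path: it is a closed path and no proper subset of it is one. -/
def IsMinimalClosedPath {α : Type*} {r : ℕ} (h : Fin r → α → ℝ) (p : Finset α) : Prop :=
  IsClosedPath h p ∧ ∀ q ⊂ p, ¬ IsClosedPath h q

/-!
The closed-path conditions say exactly that `f` (as a functional on finitely supported weights
`μ` on `X`, `μ ↦ ∑ μ x * f x`) vanishes on the kernel of `T μ = (h_i)_* μ`, `i = 1, …, r`.
A functional vanishing on `ker T` factors through `T`, and the factor, extended from `range T`
to all of `Fin r → (ℝ →₀ ℝ)`, evaluated on the basis vectors `(i, t)` gives the `g_i(t)`.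
The converse holds because `G_{p,λ}(g ∘ h_i) = 0` whenever the `λ`-weights of every fibre of `h_i`
sum to zero.
-/

open Finset

theorem Finset.sum_mul_comp_eq_zero_of_sum_fiber_eq_zero {α β R : Type*}
    [NonUnitalNonAssocSemiring R] (p : Finset α) (φ : α → β) (lam : α → R)
    (hfib : ∀ b, ∑ x ∈ p with φ x = b, lam x = 0) (g : β → R) : ∑ x ∈ p, lam x * g (φ x) = 0 := by
  rw [← sum_fiberwise_of_maps_to (g := φ) (t := p.image φ) fun x hx => mem_image_of_mem φ hx]
  refine sum_eq_zero fun b _ => ?_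
  calc ∑ x ∈ p with φ x = b, lam x * g (φ x)
      = ∑ x ∈ p with φ x = b, lam x * g b :=
        sum_congr rfl fun x hx => by rw [(mem_filter.1 hx).2]
    _ = 0 := by rw [← sum_mul, hfib b, zero_mul]

theorem Finsupp.mapDomain_apply_eq_sum_filter {α β M : Type*} [AddCommMonoid M] (φ : α → β)
    (μ : α →₀ M) (b : β) : μ.mapDomain φ b = ∑ x ∈ μ.support with φ x = b, μ x := by
  simp [mapDomain, sum, single_apply, sum_ite]

theorem LinearMap.exists_comp_eq_of_ker_le {K V W U : Type*} [Field K] [AddCommGroup V]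
    [Module K V] [AddCommGroup W] [Module K W] [AddCommGroup U] [Module K U]
    (T : V →ₗ[K] W) (L : V →ₗ[K] U) (hker : ker T ≤ ker L) : ∃ G : W →ₗ[K] U, G ∘ₗ T = L := by
  obtain ⟨G, hG⟩ := ((ker T).liftQ L hker ∘ₗ T.quotKerEquivRange.symm.toLinearMap).exists_extend
  refine ⟨G, LinearMap.ext fun v => ?_⟩
  have hv := LinearMap.congr_fun hG ⟨T v, LinearMap.mem_range_self T v⟩
  simpa only [LinearMap.comp_apply, LinearEquiv.coe_coe, T.quotKerEquivRange_symm_apply_image,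
    Submodule.mkQ_apply, Submodule.liftQ_apply, Submodule.subtype_apply] using hv

theorem closedPathPair_support_of_mapDomain_eq_zero {X : Type*} {r : ℕ} (h : Fin r → X → ℝ)
    {μ : X →₀ ℝ} (hμ : μ ≠ 0) (hT : ∀ i, μ.mapDomain (h i) = 0) :
    ClosedPathPair h μ.support μ :=
  ⟨Finsupp.support_nonempty_iff.2 hμ, fun _ => Finsupp.mem_support_iff.1, fun i t => by
    rw [← Finsupp.mapDomain_apply_eq_sum_filter, hT i, Finsupp.zero_apply]⟩

theorem mem_superpositions_iff_of_disjoint_ranges_general {X : Type*} {r : ℕ} (h : Fin r → X → ℝ)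
    (f : X → ℝ) :
    (∃ g : Fin r → ℝ → ℝ, ∀ x, f x = ∑ i, g i (h i x)) ↔
      ∀ (p : Finset X) (lam : X → ℝ), ClosedPathPair h p lam →
        ∑ x ∈ p, lam x * f x = 0 := by
  constructor
  · rintro ⟨g, hg⟩ p lam ⟨-, -, hsum⟩
    simp_rw [hg, mul_sum]
    rw [sum_comm]
    exact sum_eq_zero fun i _ =>
      p.sum_mul_comp_eq_zero_of_sum_fiber_eq_zero (h i) lam (hsum i) (g i)
  · intro H
    let T : (X →₀ ℝ) →ₗ[ℝ] Fin r → ℝ →₀ ℝ := LinearMap.pi fun i => Finsupp.lmapDomain ℝ ℝ (h i)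
    let L : (X →₀ ℝ) →ₗ[ℝ] ℝ := Finsupp.linearCombination ℝ f
    have hker : LinearMap.ker T ≤ LinearMap.ker L := by
      intro μ hμ
      by_cases hμ0 : μ = 0
      · simp [hμ0]
      have hpair := closedPathPair_support_of_mapDomain_eq_zero h hμ0 (congr_fun hμ)
      simpa [L, Finsupp.linearCombination_apply, Finsupp.sum, mul_comm] using H _ _ hpair
    obtain ⟨G, hG⟩ := T.exists_comp_eq_of_ker_le L hker
    refine ⟨fun i t => G (Pi.single i (Finsupp.single t 1)), fun x => ?_⟩
    have hTx : T (Finsupp.single x 1) = ∑ i, Pi.single i (Finsupp.single (h i x) 1) := by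
      ext i : 1
      simp [T]
    calc f x = L (Finsupp.single x 1) := by simp [L]
      _ = G (T (Finsupp.single x 1)) := (LinearMap.congr_fun hG _).symm
      _ = ∑ i, G (Pi.single i (Finsupp.single (h i x) 1)) := by rw [hTx, map_sum]

/-- Lemma 2.2: if the ranges of `h_1,…,h_r` are pairwise disjoint, then `f` belongs to
`B(h_1,…,h_r;X)` iff `G_{p,λ}(f) = 0` for every closed path–vector pair `⟨p,λ⟩`. -/
theorem mem_superpositions_iff_of_disjoint_ranges {X : Type*} {r : ℕ} (h : Fin r → X → ℝ)
    (hdisj : ∀ i j : Fin r, i ≠ j → ∀ x y : X, h i x ≠ h j y)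
    (f : X → ℝ) :
    (∃ g : Fin r → ℝ → ℝ, ∀ x, f x = ∑ i, g i (h i x)) ↔
      ∀ (p : Finset X) (lam : X → ℝ), ClosedPathPair h p lam →
        ∑ x ∈ p, lam x * f x = 0 :=
  mem_superpositions_iff_of_disjoint_ranges_general h f
end

section
/- Lemma 2.4: Let X be a set and h_1,…,h_r : X → ℝ fixed functions, and let ⟨p,λ⟩ be a closed path–vector pair of X. Then there exist minimal closed paths p_1,…,p_k contained in p, vectors λ^(1),…,λ^(k) of nonzero reals making ⟨p_1,λ^(1)⟩,…,⟨p_k,λ^(k)⟩ closed path–vector pairs, and real coefficients c_1,…,c_k, such that G_{p,λ}(f) = Σ_{s=1}^k c_s G_{p_s,λ^(s)}(f) for every function f : X → ℝ. -/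
open scoped Classical

/-!
Allow zero weights, and call `λ` balanced on `p` if its sums over the level sets of every `h i`
vanish. By strong induction on `p`, every balanced `G_{p,λ}` lies in the span of the functionals
of minimal closed paths inside `p`. Points of zero weight can be discarded. Otherwise either `p` is
minimal, or it contains a closed path `⟨q, μ⟩` with `q ⊂ p`; subtracting from `λ` the multiple of
`μ` that cancels the weight of a point of `q` leaves a balanced weighting of `p` with a zero weight.
-/

open Finset

section

variable {X : Type*} {r : ℕ} (h : Fin r → X → ℝ)

def IsBalanced (p : Finset X) (lam : X → ℝ) : Prop :=
  ∀ (i : Fin r) (t : ℝ), ∑ x ∈ p.filter (fun x => h i x = t), lam x = 0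

def pathFunctional (p : Finset X) : (X → ℝ) →ₗ[ℝ] Module.Dual ℝ (X → ℝ) :=
  LinearMap.mk₂ ℝ (fun lam f => ∑ x ∈ p, lam x * f x)
    (fun _ _ _ => by simp only [Pi.add_apply, add_mul, sum_add_distrib])
    (fun _ _ _ => by simp only [Pi.smul_apply, smul_eq_mul, mul_assoc, mul_sum])
    (fun _ _ _ => by simp only [Pi.add_apply, mul_add, sum_add_distrib])
    (fun _ _ _ => by simp only [Pi.smul_apply, smul_eq_mul, mul_left_comm, mul_sum])

def minimalPathSpan (p : Finset X) : Submodule ℝ (Module.Dual ℝ (X → ℝ)) :=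
  Submodule.span ℝ {G | ∃ q ⊆ p, IsMinimalClosedPath h q ∧
    ∃ mu, ClosedPathPair h q mu ∧ pathFunctional q mu = G}

variable {h}

theorem pathFunctional_apply (p : Finset X) (lam f : X → ℝ) :
    pathFunctional p lam f = ∑ x ∈ p, lam x * f x :=
  rfl

theorem isBalanced_iff_pathFunctional_levelSet {p : Finset X} {lam : X → ℝ} :
    IsBalanced h p lam ↔
      ∀ i t, pathFunctional p lam ({x | h i x = t}.indicator 1) = 0 := by
  simp [IsBalanced, pathFunctional_apply, Set.indicator_apply, sum_filter]

theorem pathFunctional_filter_ne_zero (p : Finset X) (lam : X → ℝ) :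
    pathFunctional (p.filter (lam · ≠ 0)) lam = pathFunctional p lam := by
  ext f
  simp only [pathFunctional_apply]
  exact sum_filter_of_ne fun x _ hx => left_ne_zero_of_mul hx

theorem pathFunctional_indicator {p q : Finset X} (hqp : q ⊆ p) (mu : X → ℝ) :
    pathFunctional p ((q : Set X).indicator mu) = pathFunctional q mu := by
  ext f
  simp only [pathFunctional_apply, ← Set.indicator_mul_left]
  exact sum_indicator_subset _ hqp

theorem IsBalanced.filter_ne_zero {p : Finset X} {lam : X → ℝ} (hb : IsBalanced h p lam) :
    IsBalanced h (p.filter (lam · ≠ 0)) lam := by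
  rw [isBalanced_iff_pathFunctional_levelSet] at hb ⊢
  simpa only [pathFunctional_filter_ne_zero] using hb

theorem IsBalanced.sub_smul_indicator {p q : Finset X} {lam mu : X → ℝ}
    (hb : IsBalanced h p lam) (hq : IsBalanced h q mu) (hqp : q ⊆ p) (c : ℝ) :
    IsBalanced h p (lam - c • (q : Set X).indicator mu) := by
  rw [isBalanced_iff_pathFunctional_levelSet] at hb hq ⊢
  intro i t
  simp [pathFunctional_indicator hqp, hb, hq]

theorem minimalPathSpan_mono {p p' : Finset X} (hpp' : p ⊆ p') :
    minimalPathSpan h p ≤ minimalPathSpan h p' :=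
  Submodule.span_mono fun _ ⟨q, hqp, hq⟩ => ⟨q, hqp.trans hpp', hq⟩

theorem pathFunctional_mem_minimalPathSpan {p : Finset X} {lam : X → ℝ}
    (hb : IsBalanced h p lam) : pathFunctional p lam ∈ minimalPathSpan h p := by
  induction p using Finset.strongInduction generalizing lam with
  | H p ih =>
  have of_vanishing : ∀ mu, IsBalanced h p mu → (∃ x ∈ p, mu x = 0) →
      pathFunctional p mu ∈ minimalPathSpan h p := fun mu hmu ⟨x, hx, hx0⟩ => by
    have hss : p.filter (mu · ≠ 0) ⊂ p := filter_ssubset.2 ⟨x, hx, not_not.2 hx0⟩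
    rw [← pathFunctional_filter_ne_zero]
    exact minimalPathSpan_mono hss.subset (ih _ hss hmu.filter_ne_zero)
  by_cases hzero : ∃ x ∈ p, lam x = 0
  · exact of_vanishing lam hb hzero
  push Not at hzero
  rcases p.eq_empty_or_nonempty with rfl | hne
  · convert zero_mem (minimalPathSpan h ∅)
    ext
    rfl
  have hpair : ClosedPathPair h p lam := ⟨hne, hzero, hb⟩
  by_cases hmin : ∀ q ⊂ p, ¬ IsClosedPath h q
  · exact Submodule.subset_span ⟨p, subset_rfl, ⟨⟨lam, hpair⟩, hmin⟩, lam, hpair, rfl⟩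
  push Not at hmin
  obtain ⟨q, hqp, mu, hq⟩ := hmin
  obtain ⟨x₀, hx₀⟩ := hq.1
  set c := lam x₀ / mu x₀
  set lam' := lam - c • (q : Set X).indicator mu
  have hdecomp : pathFunctional p lam = pathFunctional p lam' + c • pathFunctional q mu := by
    simp [lam', pathFunctional_indicator hqp.subset]
  have hx₀' : lam' x₀ = 0 := by simp [lam', c, hx₀, hq.2.1 x₀ hx₀]
  rw [hdecomp]
  exact add_mem
    (of_vanishing lam' (hb.sub_smul_indicator hq.2.2 hqp.subset c) ⟨x₀, hqp.subset hx₀, hx₀'⟩)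
    (Submodule.smul_mem _ _ (minimalPathSpan_mono hqp.subset (ih q hqp hq.2.2)))

end

/-- Lemma 2.4: `G_{p,λ}` is a linear combination of functionals associated with
minimal closed paths contained in `p`. -/
theorem functional_eq_lincomb_of_minimal {X : Type*} {r : ℕ} (h : Fin r → X → ℝ)
    (p : Finset X) (lam : X → ℝ) (hp : ClosedPathPair h p lam) :
    ∃ (k : ℕ) (q : Fin k → Finset X) (mu : Fin k → X → ℝ) (c : Fin k → ℝ),
      (∀ s, q s ⊆ p) ∧
      (∀ s, IsMinimalClosedPath h (q s)) ∧
      (∀ s, ClosedPathPair h (q s) (mu s)) ∧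
      ∀ f : X → ℝ, ∑ x ∈ p, lam x * f x = ∑ s, c s * ∑ x ∈ q s, mu s x * f x := by
  obtain ⟨k, c, G, hG⟩ :=
    Submodule.mem_span_set'.1 (pathFunctional_mem_minimalPathSpan hp.2.2)
  choose q hqp hmin mu hpair hGq using fun s => (G s).2
  refine ⟨k, q, mu, c, hqp, hmin, hpair, fun f => ?_⟩
  rw [← pathFunctional_apply, ← hG]
  simp only [← hGq, LinearMap.sum_apply, LinearMap.smul_apply, smul_eq_mul, pathFunctional_apply]
end

section
/- Theorem 2.5, part 2: Let X be a set and h_1,…,h_r : X → ℝ fixed functions. If X has no closed paths with respect to h_1,…,h_r, then B(h_1,…,h_r;X) = T(X); that is, every function f : X → ℝ can be written as f(x) = Σ_{i=1}^r g_i(h_i(x)) for some g_1,…,g_r : ℝ → ℝ. -/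
open scoped Classical

/-!
Send a finitely supported weighting `lam` of `X` to the family of its level-set sums
`(i, t) ↦ ∑_{h i x = t} lam x`. If this linear map kills a nonzero `lam`, then `lam` witnesses
that its support is a closed path; so without closed paths the map is injective and, over a
field, has a linear left inverse. Composing that left inverse with the linear extension of `f` gives a
functional `G`, and `g i t := G (single (i, t) 1)` represents `f`, because the image of the point
mass at `x` is `∑ i, single (i, h i x) 1`.
-/

noncomputable section

namespace Superposition

variable {X : Type*} {r : ℕ} (h : Fin r → X → ℝ)

def levelVector (x : X) : Fin r × ℝ →₀ ℝ :=
  ∑ i, Finsupp.single (i, h i x) 1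

def levelMap : (X →₀ ℝ) →ₗ[ℝ] (Fin r × ℝ →₀ ℝ) :=
  Finsupp.linearCombination ℝ (levelVector h)

theorem levelVector_apply (x : X) (i : Fin r) (t : ℝ) :
    levelVector h x (i, t) = if h i x = t then 1 else 0 := by
  simp only [levelVector, Finsupp.finsetSum_apply, Finsupp.single_apply, Prod.mk.injEq,
    ite_and, Finset.sum_ite_eq', Finset.mem_univ, if_true]

theorem levelMap_single (x : X) : levelMap h (Finsupp.single x 1) = levelVector h x := by
  rw [levelMap, Finsupp.linearCombination_single, one_smul]

theorem levelMap_apply (lam : X →₀ ℝ) (i : Fin r) (t : ℝ) :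
    levelMap h lam (i, t) = ∑ x ∈ lam.support with h i x = t, lam x := by
  rw [levelMap, Finsupp.linearCombination_apply, Finsupp.sum_apply, Finsupp.sum,
    Finset.sum_filter]
  refine Finset.sum_congr rfl fun x _ => ?_
  rw [Finsupp.smul_apply, levelVector_apply, smul_eq_mul, mul_ite, mul_one, mul_zero]

theorem isClosedPath_support_of_levelMap_eq_zero {lam : X →₀ ℝ} (hlam : lam ≠ 0)
    (hzero : levelMap h lam = 0) : IsClosedPath h lam.support :=
  ⟨lam, Finsupp.support_nonempty_iff.2 hlam, fun _ => Finsupp.mem_support_iff.1,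
    fun i t => by rw [← levelMap_apply, hzero, Finsupp.zero_apply]⟩

theorem ker_levelMap_eq_bot (hX : ∀ p : Finset X, ¬ IsClosedPath h p) :
    LinearMap.ker (levelMap h) = ⊥ := by
  refine LinearMap.ker_eq_bot'.2 fun lam hzero => ?_
  by_contra hlam
  exact hX _ (isClosedPath_support_of_levelMap_eq_zero h hlam hzero)

theorem exists_superposition_of_ker_levelMap_eq_bot (hker : LinearMap.ker (levelMap h) = ⊥)
    (f : X → ℝ) : ∃ g : Fin r → ℝ → ℝ, ∀ x, f x = ∑ i, g i (h i x) := by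
  obtain ⟨M, hM⟩ := (levelMap h).exists_leftInverse_of_injective hker
  set G := Finsupp.linearCombination ℝ f ∘ₗ M
  refine ⟨fun i t => G (Finsupp.single (i, t) 1), fun x => ?_⟩
  calc f x = Finsupp.linearCombination ℝ f (Finsupp.single x 1) := by
        rw [Finsupp.linearCombination_single, one_smul]
    _ = G (levelMap h (Finsupp.single x 1)) := by
        rw [LinearMap.comp_apply, ← LinearMap.comp_apply M, hM, LinearMap.id_apply]
    _ = ∑ i, G (Finsupp.single (i, h i x) 1) := by
        rw [levelMap_single, levelVector, map_sum]

end Superposition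

end

open Superposition in
/-- Theorem 2.5, part 2: if `X` has no closed paths, then every function on `X`
is a linear superposition. -/
theorem superpositions_eq_all_of_no_closedPath {X : Type*} {r : ℕ} (h : Fin r → X → ℝ)
    (hX : ∀ p : Finset X, ¬ IsClosedPath h p) (f : X → ℝ) :
    ∃ g : Fin r → ℝ → ℝ, ∀ x, f x = ∑ i, g i (h i x) :=
  exists_superposition_of_ker_levelMap_eq_bot h (ker_levelMap_eq_bot h hX) f
end

section
/- Theorem 2.6: Let X be a set and h_1,…,h_r : X → ℝ fixed functions. Then B(h_1,…,h_r;X) = T(X) (i.e., every function f : X → ℝ equals Σ_{i=1}^r g_i ∘ h_i for some g_1,…,g_r : ℝ → ℝ) if and only if X has no closed paths with respect to h_1,…,h_r. -/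
open scoped Classical

/-!
Send `x ∈ X` to the vector `v x := ∑ i, e (i, h i x)` in the free real vector space on
`Fin r × ℝ`. A superposition `∑ i, g i (h i x)` is exactly `φ (v x)` for the linear functional
`φ` with `φ (e (i, t)) = g i t`, and a closed path is exactly a nontrivial linear relation
among the `v x`. So every `f : X → ℝ` is a superposition iff every `f` is `φ ∘ v` for some
functional `φ`, iff the family `v` is linearly independent, iff there is no closed path.
-/

section

variable {ι K V : Type*} [Field K] [AddCommGroup V] [Module K V]

theorem LinearIndependent.exists_linearMap_apply_eq {v : ι → V} (hv : LinearIndependent K v)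
    (f : ι → K) : ∃ φ : V →ₗ[K] K, ∀ i, φ (v i) = f i := by
  obtain ⟨φ, hφ⟩ := LinearMap.exists_extend ((Module.Basis.span hv).constr K f)
  refine ⟨φ, fun i => ?_⟩
  rw [← Module.Basis.coe_span_apply hv i, ← Submodule.subtype_apply, ← LinearMap.comp_apply, hφ,
    Module.Basis.constr_basis]

theorem linearIndependent_iff_forall_exists_linearMap {v : ι → V} :
    LinearIndependent K v ↔ ∀ f : ι → K, ∃ φ : V →ₗ[K] K, ∀ i, φ (v i) = f i := by
  refine ⟨LinearIndependent.exists_linearMap_apply_eq, fun H => ?_⟩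
  rw [linearIndependent_iff']
  intro s c hc i hi
  obtain ⟨φ, hφ⟩ := H (Pi.single i 1)
  simpa [map_sum, hφ, Pi.single_apply, hi] using congr_arg φ hc

end

namespace ClosedPath

variable {X : Type*} {r : ℕ} (h : Fin r → X → ℝ)

noncomputable def levelVector (x : X) : (Fin r × ℝ) →₀ ℝ :=
  ∑ i, Finsupp.single (i, h i x) 1

theorem levelVector_apply (x : X) (i : Fin r) (t : ℝ) :
    levelVector h x (i, t) = if h i x = t then 1 else 0 := by
  rw [levelVector, Finsupp.finsetSum_apply, Finset.sum_eq_single i]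
  · simp [Finsupp.single_apply]
  · intro j _ hj
    simp [hj]
  · simp

theorem sum_smul_levelVector_apply (s : Finset X) (c : X → ℝ) (i : Fin r) (t : ℝ) :
    (∑ x ∈ s, c x • levelVector h x) (i, t) = ∑ x ∈ s with h i x = t, c x := by
  simp [Finsupp.finsetSum_apply, levelVector_apply, Finset.sum_filter]

theorem exists_superposition_iff (f : X → ℝ) :
    (∃ g : Fin r → ℝ → ℝ, ∀ x, f x = ∑ i, g i (h i x)) ↔
      ∃ φ : ((Fin r × ℝ) →₀ ℝ) →ₗ[ℝ] ℝ, ∀ x, φ (levelVector h x) = f x := by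
  constructor
  · rintro ⟨g, hg⟩
    refine ⟨Finsupp.linearCombination ℝ (fun p => g p.1 p.2), fun x => ?_⟩
    simp [levelVector, map_sum, hg x]
  · rintro ⟨φ, hφ⟩
    refine ⟨fun i t => φ (Finsupp.single (i, t) 1), fun x => ?_⟩
    rw [← hφ x, levelVector, map_sum]

theorem linearIndependent_levelVector_iff :
    LinearIndependent ℝ (levelVector h) ↔ ∀ p : Finset X, ¬ IsClosedPath h p := by
  constructor
  · rintro hli p ⟨lam, ⟨x, hx⟩, hne, hsum⟩
    have hrel : ∑ y ∈ p, lam y • levelVector h y = 0 := by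
      ext ⟨i, t⟩
      rw [sum_smul_levelVector_apply, hsum, Finsupp.zero_apply]
    exact hne x hx (linearIndependent_iff'.mp hli p lam hrel x hx)
  · intro H
    rw [linearIndependent_iff']
    intro s c hrel x hx
    by_contra hcx
    refine H {y ∈ s | c y ≠ 0} ⟨c, ⟨x, Finset.mem_filter.mpr ⟨hx, hcx⟩⟩,
      fun y hy => (Finset.mem_filter.mp hy).2, fun i t => ?_⟩
    rw [Finset.filter_comm, Finset.sum_filter_ne_zero, ← sum_smul_levelVector_apply, hrel,
      Finsupp.zero_apply]

end ClosedPath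

/-- Theorem 2.6: `B(h_1,…,h_r;X) = T(X)` iff `X` has no closed paths. -/
theorem superpositions_eq_all_iff_no_closedPath {X : Type*} {r : ℕ} (h : Fin r → X → ℝ) :
    (∀ f : X → ℝ, ∃ g : Fin r → ℝ → ℝ, ∀ x, f x = ∑ i, g i (h i x)) ↔
      ∀ p : Finset X, ¬ IsClosedPath h p := by
  simp_rw [ClosedPath.exists_superposition_iff, ← linearIndependent_iff_forall_exists_linearMap]
  exact ClosedPath.linearIndependent_levelVector_iff h
end

section
/- Theorem 3.1: Let X be a set, h_1,…,h_r : X → ℝ fixed functions, and let A(X) be a permissible class of functions on X, i.e., a set of real-valued functions on X such that for every minimal closed path p = {x_1,…,x_n} ⊆ X with associated vector λ = (λ_1,…,λ_n), there exists f_0 ∈ A(X) with Σ_{j=1}^n λ_j f_0(x_j) ≠ 0. If B(h_1,…,h_r;X) = A(X), then B(h_1,…,h_r;X) = T(X), i.e., every function f : X → ℝ equals Σ_{i=1}^r g_i ∘ h_i for some g_1,…,g_r : ℝ → ℝ. -/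
/-!
Every closed path contains a minimal one, and the weights of a closed path annihilate every
superposition `∑ i, g i ∘ h i`. So if the superpositions contain a permissible class, there are
no closed paths at all. That means the linear map sending a point `x` to the formal sum
`∑ i, δ (i, h i x)` is injective on finitely supported measures on `X`: a nonzero kernel element
would be a closed path with its weights. A left inverse `S` of this map turns any `f` into a
superposition, with `g i t` the value at `S δ (i, t)` of the linear extension of `f`.
-/

open scoped Classical

section

variable {X : Type*} {r : ℕ} {h : Fin r → X → ℝ}

theorem ClosedPathPair.sum_mul_superposition_eq_zero {p : Finset X} {lam : X → ℝ}
    (hp : ClosedPathPair h p lam) (g : Fin r → ℝ → ℝ) :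
    ∑ x ∈ p, lam x * ∑ i, g i (h i x) = 0 := by
  simp_rw [Finset.mul_sum]
  rw [Finset.sum_comm]
  refine Finset.sum_eq_zero fun i _ => ?_
  rw [← Finset.sum_fiberwise_of_maps_to (g := h i) (t := p.image (h i))
    (fun x hx => Finset.mem_image_of_mem _ hx)]
  refine Finset.sum_eq_zero fun t _ => ?_
  calc ∑ x ∈ p with h i x = t, lam x * g i (h i x)
      = ∑ x ∈ p with h i x = t, lam x * g i t :=
        Finset.sum_congr rfl fun x hx => by rw [(Finset.mem_filter.1 hx).2]
    _ = 0 := by rw [← Finset.sum_mul, hp.2.2 i t, zero_mul]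

theorem IsClosedPath.exists_subset_isMinimalClosedPath {p : Finset X}
    (hp : IsClosedPath h p) : ∃ q ⊆ p, IsMinimalClosedPath h q := by
  obtain ⟨q, hqp, hq⟩ := exists_minimal_le_of_wellFoundedLT (IsClosedPath h) p hp
  exact ⟨q, hqp, hq.prop, fun _ hlt => hq.not_prop_of_lt hlt⟩

theorem not_isClosedPath_of_permissible_subset_superpositions {A : Set (X → ℝ)}
    (hA : ∀ (p : Finset X) (lam : X → ℝ), IsMinimalClosedPath h p →
      ClosedPathPair h p lam → ∃ f0 ∈ A, ∑ x ∈ p, lam x * f0 x ≠ 0)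
    (hAB : A ⊆ {f : X → ℝ | ∃ g : Fin r → ℝ → ℝ, ∀ x, f x = ∑ i, g i (h i x)})
    (p : Finset X) :
    ¬ IsClosedPath h p := by
  intro hp
  obtain ⟨q, -, hq⟩ := hp.exists_subset_isMinimalClosedPath
  obtain ⟨lam, hlam⟩ := hq.1
  obtain ⟨f, hfA, hf⟩ := hA q lam hq hlam
  obtain ⟨g, rfl⟩ : ∃ g : Fin r → ℝ → ℝ, f = fun x => ∑ i, g i (h i x) := by
    obtain ⟨g, hg⟩ := hAB hfA
    exact ⟨g, funext hg⟩
  exact hf (hlam.sum_mul_superposition_eq_zero g)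

variable (h) in
noncomputable def levelPushforward : (X →₀ ℝ) →ₗ[ℝ] (Fin r × ℝ →₀ ℝ) :=
  Finsupp.linearCombination ℝ fun x => ∑ i, Finsupp.single (i, h i x) 1

theorem levelPushforward_apply (v : X →₀ ℝ) (i : Fin r) (t : ℝ) :
    levelPushforward h v (i, t) = ∑ x ∈ v.support with h i x = t, v x := by
  have hsingle : ∀ x, (∑ j, Finsupp.single (j, h j x) (1 : ℝ)) (i, t) =
      if h i x = t then 1 else 0 := by
    intro x
    rw [Finsupp.finsetSum_apply, Finset.sum_eq_single i]
    · simp [Finsupp.single_apply]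
    · intro j _ hji
      simp [hji]
    · simp
  rw [levelPushforward, Finsupp.linearCombination_apply, Finsupp.sum_apply, Finsupp.sum,
    Finset.sum_filter]
  refine Finset.sum_congr rfl fun x _ => ?_
  rw [Finsupp.smul_apply, hsingle, smul_eq_mul, mul_ite, mul_one, mul_zero]

theorem levelPushforward_injective (hnc : ∀ p : Finset X, ¬ IsClosedPath h p) :
    Function.Injective (levelPushforward h) := by
  rw [← LinearMap.ker_eq_bot, LinearMap.ker_eq_bot']
  intro v hv
  by_contra hv0
  refine hnc v.support ⟨v, Finsupp.support_nonempty_iff.2 hv0,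
    fun x hx => Finsupp.mem_support_iff.1 hx, fun i t => ?_⟩
  rw [← levelPushforward_apply, hv, Finsupp.coe_zero, Pi.zero_apply]

theorem exists_superposition_of_forall_not_isClosedPath
    (hnc : ∀ p : Finset X, ¬ IsClosedPath h p) (f : X → ℝ) :
    ∃ g : Fin r → ℝ → ℝ, ∀ x, f x = ∑ i, g i (h i x) := by
  obtain ⟨S, hS⟩ := LinearMap.exists_leftInverse_of_injective (levelPushforward h)
    (LinearMap.ker_eq_bot.2 (levelPushforward_injective hnc))
  let F := Finsupp.linearCombination ℝ f
  refine ⟨fun i t => F (S (Finsupp.single (i, t) 1)), fun x => ?_⟩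
  calc f x = F (S (levelPushforward h (Finsupp.single x 1))) := by
        rw [← LinearMap.comp_apply S, hS, LinearMap.id_apply, Finsupp.linearCombination_single,
          one_smul]
    _ = ∑ i, F (S (Finsupp.single (i, h i x) 1)) := by
        rw [levelPushforward, Finsupp.linearCombination_single, one_smul, map_sum, map_sum]

end

/-- Theorem 3.1: if `B(h_1,…,h_r;X)` equals a permissible class `A(X)`, then
`B(h_1,…,h_r;X) = T(X)`. -/
theorem superpositions_eq_all_of_eq_permissible {X : Type*} {r : ℕ} (h : Fin r → X → ℝ)
    (A : Set (X → ℝ))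
    (hA : ∀ (p : Finset X) (lam : X → ℝ), IsMinimalClosedPath h p →
      ClosedPathPair h p lam → ∃ f0 ∈ A, ∑ x ∈ p, lam x * f0 x ≠ 0)
    (hBA : {f : X → ℝ | ∃ g : Fin r → ℝ → ℝ, ∀ x, f x = ∑ i, g i (h i x)} = A) :
    ∀ f : X → ℝ, ∃ g : Fin r → ℝ → ℝ, ∀ x, f x = ∑ i, g i (h i x) :=
  exists_superposition_of_forall_not_isClosedPath
    (not_isClosedPath_of_permissible_subset_superpositions hA hBA.symm.subset)
end

section
/- Let X be a metric space and h_1,…,h_r : X → ℝ continuous functions. If every continuous function f : X → ℝ can be written as f = Σ_{i=1}^r g_i ∘ h_i with continuous g_1,…,g_r : ℝ → ℝ, then every function f : X → ℝ (with no continuity assumption) can be written as f = Σ_{i=1}^r g_i ∘ h_i for some (arbitrary) functions g_1,…,g_r : ℝ → ℝ. -/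
/-!
Identify a finitely supported `c : X →₀ ℝ` with a formal combination of point masses and push it
forward along every `h i`; this is a linear map `S : (X →₀ ℝ) → (Fin r → ℝ →₀ ℝ)`. A linear
functional on the target is the same thing as a family `g` of arbitrary functions `ℝ → ℝ`, and
its pullback along `S` is integration against `Σ g i ∘ h i`. So every function on `X` is a
superposition iff the dual map of `S` is surjective, i.e. iff `S` is injective. Injectivity only
needs that the superpositions separate finitely supported `c`, and by Urysohn already the
continuous functions do.
-/

open Finsupp

section Superposition

variable {K ι X Y : Type*} [Field K] [Fintype ι]

noncomputable def superpositionMap (h : ι → X → Y) : (X →₀ K) →ₗ[K] ι → Y →₀ K :=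
  LinearMap.pi fun i => lmapDomain K K (h i)

noncomputable def superpositionDual (g : ι → Y → K) : Module.Dual K (ι → Y →₀ K) :=
  ∑ i, (linearCombination K (g i)).comp (LinearMap.proj i)

theorem superpositionDual_comp_superpositionMap (h : ι → X → Y) (g : ι → Y → K) :
    (superpositionDual g).comp (superpositionMap h) =
      linearCombination K fun x => ∑ i, g i (h i x) := by
  ext x
  simp [superpositionDual, superpositionMap]

theorem superpositionDual_apply_single [DecidableEq ι] (ψ : Module.Dual K (ι → Y →₀ K)) :
    superpositionDual (fun i t => ψ (Pi.single i (single t 1))) = ψ := by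
  refine LinearMap.pi_ext' fun i => ?_
  ext t
  simp [superpositionDual, Pi.single_apply, apply_ite]

theorem exists_superposition_of_injective {h : ι → X → Y}
    (hS : Function.Injective (superpositionMap (K := K) h)) (f : X → K) :
    ∃ g : ι → Y → K, ∀ x, f x = ∑ i, g i (h i x) := by
  classical
  obtain ⟨ψ, hψ⟩ := LinearMap.dualMap_surjective_iff.mpr hS (linearCombination K f)
  refine ⟨fun i t => ψ (Pi.single i (single t 1)), fun x => ?_⟩
  have hcomp := superpositionDual_comp_superpositionMap h fun i t => ψ (Pi.single i (single t 1))
  rw [superpositionDual_apply_single, ← LinearMap.dualMap_apply', hψ] at hcomp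
  simpa using congr($hcomp (single x 1))

theorem superpositionMap_injective {h : ι → X → Y} (F : Set (X → K))
    (hsep : ∀ c : X →₀ K, (∀ f ∈ F, linearCombination K f c = 0) → c = 0)
    (hF : ∀ f ∈ F, ∃ g : ι → Y → K, ∀ x, f x = ∑ i, g i (h i x)) :
    Function.Injective (superpositionMap (K := K) h) := by
  refine (injective_iff_map_eq_zero _).mpr fun c hc => hsep c fun f hf => ?_
  obtain ⟨g, hg⟩ := hF f hf
  have hcomp := superpositionDual_comp_superpositionMap h g
  rw [← funext hg] at hcomp
  rw [← hcomp, LinearMap.comp_apply, hc, map_zero]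

end Superposition

theorem Finsupp.eq_zero_of_forall_linearCombination_continuous {X : Type*} [TopologicalSpace X]
    [NormalSpace X] [T1Space X] (c : X →₀ ℝ)
    (hc : ∀ f : X → ℝ, Continuous f → linearCombination ℝ f c = 0) : c = 0 := by
  classical
  ext x₀
  by_contra hne
  have hx₀ : x₀ ∈ c.support := mem_support_iff.mpr hne
  obtain ⟨f, hf0, hf1, -⟩ := exists_continuous_zero_one_of_isClosed
    (c.support.erase x₀).finite_toSet.isClosed isClosed_singleton
    (Set.disjoint_singleton_right.mpr (c.support.notMem_erase x₀))
  have hf : linearCombination ℝ f c = c x₀ := by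
    rw [linearCombination_apply, Finsupp.sum, Finset.sum_eq_single_of_mem x₀ hx₀]
    · simp [hf1 (Set.mem_singleton x₀)]
    · intro y hy hyx
      simp [hf0 (Finset.mem_erase.mpr ⟨hyx, hy⟩)]
  exact hne (hf ▸ hc f f.continuous)

theorem all_superpositions_of_continuous_superpositions_general
    {X : Type*} [MetricSpace X] {r : ℕ} (h : Fin r → X → ℝ)
    (H : ∀ f : X → ℝ, Continuous f → ∃ g : Fin r → ℝ → ℝ,
      (∀ i, Continuous (g i)) ∧ ∀ x, f x = ∑ i, g i (h i x)) :
    ∀ f : X → ℝ, ∃ g : Fin r → ℝ → ℝ, ∀ x, f x = ∑ i, g i (h i x) :=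
  exists_superposition_of_injective <| superpositionMap_injective {f | Continuous f}
    (fun c hc => c.eq_zero_of_forall_linearCombination_continuous hc)
    fun f hf => (H f hf).imp fun _ => And.right

/-- If every continuous function on the metric space `X` is a sum `Σ g_i ∘ h_i` with
continuous `g_i`, then every function on `X` is such a sum with arbitrary `g_i`. -/
theorem all_superpositions_of_continuous_superpositions
    {X : Type*} [MetricSpace X] {r : ℕ} (h : Fin r → X → ℝ)
    (hc : ∀ i, Continuous (h i))
    (H : ∀ f : X → ℝ, Continuous f → ∃ g : Fin r → ℝ → ℝ,
      (∀ i, Continuous (g i)) ∧ ∀ x, f x = ∑ i, g i (h i x)) :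
    ∀ f : X → ℝ, ∃ g : Fin r → ℝ → ℝ, ∀ x, f x = ∑ i, g i (h i x) :=
  all_superpositions_of_continuous_superpositions_general h H
end

section
/- Corollary 3.2 (conditional form): Let d ≥ 2 and let s_q : [0,1]^d → ℝ, q = 1,…,2d+1, be functions of the form s_q(x_1,…,x_d) = Σ_{p=1}^d φ_pq(x_p) with each φ_pq : [0,1] → ℝ continuous. Suppose that every continuous function f : [0,1]^d → ℝ can be represented as f(x) = Σ_{q=1}^{2d+1} g_q(s_q(x)) with continuous g_q : ℝ → ℝ. Then every function f : [0,1]^d → ℝ (with no continuity assumption) can be represented as f(x) = Σ_{q=1}^{2d+1} g_q(s_q(x)) for some functions g_q : ℝ → ℝ depending on f. -/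
/-!
Send a point `x` to the vector `r x = Σ_q (s_q x, q)` of the free vector space on `ℝ × Fin (2d+1)`.
A linear functional on that space is a family of functions `g_q`, and it sends `r x` to
`Σ_q g_q (s_q x)`. By Tietze, continuous functions take arbitrary prescribed values on a finite
set, so by hypothesis every function on a finite set is a superposition; this makes the vectors
`r x` linearly independent. A linear functional can then be given the arbitrary values `f x` on
all of them at once, and its coordinates are the required `g_q`.
-/

open Finsupp Set

section Superposition

variable {X Y ι K : Type*} [Fintype ι] [Field K]

noncomputable def superpositionVector (s : ι → X → Y) (x : X) : Y × ι →₀ K :=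
  ∑ q, single (s q x, q) 1

theorem linearCombination_superpositionVector (s : ι → X → Y) (g : ι → Y → K) (x : X) :
    linearCombination K (fun p : Y × ι ↦ g p.2 p.1) (superpositionVector s x) =
      ∑ q, g q (s q x) := by
  simp [superpositionVector]

theorem linearIndependent_superpositionVector {s : ι → X → Y}
    (h : ∀ (t : Finset X) (f : X → K), ∃ g : ι → Y → K, ∀ x ∈ t, f x = ∑ q, g q (s q x)) :
    LinearIndependent K (superpositionVector (K := K) s) := by
  classical
  rw [linearIndependent_iff']
  intro t c hc i hi
  obtain ⟨g, hg⟩ := h t (Pi.single i 1)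
  have hgc := congrArg (linearCombination K (fun p : Y × ι ↦ g p.2 p.1)) hc
  simp only [map_sum, map_smul, linearCombination_superpositionVector, map_zero,
    smul_eq_mul] at hgc
  rw [Finset.sum_congr rfl fun x hx ↦ by rw [← hg x hx]] at hgc
  simpa [Pi.single_apply, hi] using hgc

theorem exists_superposition_of_forall_finset {s : ι → X → Y}
    (h : ∀ (t : Finset X) (f : X → K), ∃ g : ι → Y → K, ∀ x ∈ t, f x = ∑ q, g q (s q x))
    (f : X → K) : ∃ g : ι → Y → K, ∀ x, f x = ∑ q, g q (s q x) := by
  obtain ⟨π, hπ⟩ := LinearMap.exists_leftInverse_of_injective _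
    (LinearMap.ker_eq_bot.mpr (linearIndependent_superpositionVector h))
  let L := linearCombination K f ∘ₗ π
  refine ⟨fun q y ↦ L (single (y, q) 1), fun x ↦ ?_⟩
  have hL : L (superpositionVector s x) = f x := by
    simpa [L] using congrArg (linearCombination K f) (LinearMap.congr_fun hπ (single x 1))
  rw [← hL, superpositionVector, map_sum]

end Superposition

theorem exists_continuousMap_eqOn_of_finite {X : Type*} [TopologicalSpace X] [NormalSpace X]
    [T1Space X] {t : Set X} (ht : t.Finite) (f : X → ℝ) : ∃ h : C(X, ℝ), EqOn h f t := by
  have := ht.to_subtype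
  obtain ⟨h, hh⟩ := ContinuousMap.exists_restrict_eq ht.isClosed
    ⟨t.domRestrict f, continuous_of_discreteTopology⟩
  exact ⟨h, fun x hx ↦ congrArg (· ⟨x, hx⟩) hh⟩


theorem exists_superposition_of_forall_continuous {X Y ι : Type*} [TopologicalSpace X]
    [NormalSpace X] [T1Space X] [Fintype ι] {s : ι → X → Y}
    (h : ∀ f : X → ℝ, Continuous f → ∃ g : ι → Y → ℝ, ∀ x, f x = ∑ q, g q (s q x))
    (f : X → ℝ) : ∃ g : ι → Y → ℝ, ∀ x, f x = ∑ q, g q (s q x) := by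
  refine exists_superposition_of_forall_finset (fun t f ↦ ?_) f
  obtain ⟨c, hc⟩ := exists_continuousMap_eqOn_of_finite t.finite_toSet f
  obtain ⟨g, hg⟩ := h c c.continuous
  exact ⟨g, fun x hx ↦ (hc hx).symm.trans (hg x)⟩

theorem kolmogorov_for_all_functions_general (d : ℕ)
    (s : Fin (2 * d + 1) → Set.Icc (0 : Fin d → ℝ) 1 → ℝ)
    (H : ∀ f : Set.Icc (0 : Fin d → ℝ) 1 → ℝ, Continuous f →
      ∃ g : Fin (2 * d + 1) → ℝ → ℝ, (∀ q, Continuous (g q)) ∧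
        ∀ x, f x = ∑ q, g q (s q x)) :
    ∀ f : Set.Icc (0 : Fin d → ℝ) 1 → ℝ,
      ∃ g : Fin (2 * d + 1) → ℝ → ℝ, ∀ x, f x = ∑ q, g q (s q x) :=
  exists_superposition_of_forall_continuous fun f hf ↦ (H f hf).imp fun _ ↦ And.right

/-- Corollary 3.2 (conditional form): if the Kolmogorov superposition theorem holds for
continuous functions on the cube `[0,1]^d` with the inner functions
`s_q(x) = Σ_p φ_pq(x_p)`, then every (not necessarily continuous) function on the cube
admits the representation `f(x) = Σ_q g_q(s_q(x))`. -/
theorem kolmogorov_for_all_functions (d : ℕ) (hd : 2 ≤ d)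
    (φ : Fin d → Fin (2 * d + 1) → Set.Icc (0 : ℝ) 1 → ℝ)
    (hφ : ∀ p q, Continuous (φ p q))
    (s : Fin (2 * d + 1) → Set.Icc (0 : Fin d → ℝ) 1 → ℝ)
    (hs : ∀ q x, s q x = ∑ p, φ p q ⟨x.val p, ⟨x.prop.1 p, x.prop.2 p⟩⟩)
    (H : ∀ f : Set.Icc (0 : Fin d → ℝ) 1 → ℝ, Continuous f →
      ∃ g : Fin (2 * d + 1) → ℝ → ℝ, (∀ q, Continuous (g q)) ∧
        ∀ x, f x = ∑ q, g q (s q x)) :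
    ∀ f : Set.Icc (0 : Fin d → ℝ) 1 → ℝ,
      ∃ g : Fin (2 * d + 1) → ℝ → ℝ, ∀ x, f x = ∑ q, g q (s q x) :=
  kolmogorov_for_all_functions_general d s H
end

section
/- Property (a) of minimal closed paths: Let X be a set, h_1,…,h_r : X → ℝ fixed functions, and let p = {x_1,…,x_n} ⊆ X be a minimal closed path with respect to h_1,…,h_r. If λ = (λ_1,…,λ_n) and μ = (μ_1,…,μ_n) are two vectors of nonzero real numbers such that both ⟨p,λ⟩ and ⟨p,μ⟩ are closed path–vector pairs, then there exists a constant c ∈ ℝ with μ_j = c·λ_j for all j = 1,…,n. -/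
open scoped Classical

/-!
Subtract from `μ` the multiple `c λ` that vanishes at one point `x₀ ∈ p`. The difference still has
vanishing sums over every level set, so wherever it is nonzero on `p` it carries a closed path
inside `p \ {x₀}`; minimality of `p` forces it to vanish on all of `p`.
-/

open Finset

namespace ClosedPath

variable {α : Type*} {r : ℕ} {h : Fin r → α → ℝ} {p : Finset α}

def IsBalanced (h : Fin r → α → ℝ) (p : Finset α) (f : α → ℝ) : Prop :=
  ∀ (i : Fin r) (t : ℝ), ∑ x ∈ p.filter (fun x => h i x = t), f x = 0

theorem _root_.ClosedPathPair.isBalanced {lam : α → ℝ} (hlam : ClosedPathPair h p lam) :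
    IsBalanced h p lam :=
  hlam.2.2

theorem IsBalanced.sub_const_mul {f g : α → ℝ} (hf : IsBalanced h p f) (hg : IsBalanced h p g)
    (c : ℝ) : IsBalanced h p (fun x => f x - c * g x) := by
  intro i t
  rw [sum_sub_distrib, ← mul_sum, hf i t, hg i t, mul_zero, sub_zero]

theorem IsBalanced.filter_ne_zero {f : α → ℝ} (hf : IsBalanced h p f) :
    IsBalanced h (p.filter (fun x => f x ≠ 0)) f := by
  intro i t
  rw [filter_comm, sum_filter_ne_zero, hf i t]

theorem IsBalanced.isClosedPath_support {f : α → ℝ} (hf : IsBalanced h p f)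
    (hne : ∃ x ∈ p, f x ≠ 0) : IsClosedPath h (p.filter (fun x => f x ≠ 0)) :=
  ⟨f, filter_nonempty_iff.mpr hne, fun _ hx => (mem_filter.mp hx).2, hf.filter_ne_zero⟩

theorem IsBalanced.eq_zero_of_isMinimalClosedPath {f : α → ℝ}
    (hmin : IsMinimalClosedPath h p) (hf : IsBalanced h p f) {x₀ : α} (hx₀ : x₀ ∈ p)
    (hfx₀ : f x₀ = 0) : ∀ x ∈ p, f x = 0 := by
  by_contra! hne
  have hsub : p.filter (fun x => f x ≠ 0) ⊂ p := filter_ssubset.mpr ⟨x₀, hx₀, not_not.mpr hfx₀⟩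
  exact hmin.2 _ hsub (hf.isClosedPath_support hne)

end ClosedPath

/-- Property (a): the vector associated with a minimal closed path is unique up to a
multiplicative constant. -/
theorem minimal_closedPath_vector_unique {X : Type*} {r : ℕ} (h : Fin r → X → ℝ)
    (p : Finset X) (hmin : IsMinimalClosedPath h p)
    (lam mu : X → ℝ) (hlam : ClosedPathPair h p lam) (hmu : ClosedPathPair h p mu) :
    ∃ c : ℝ, ∀ x ∈ p, mu x = c * lam x := by
  obtain ⟨x₀, hx₀⟩ := hlam.1
  refine ⟨mu x₀ / lam x₀, fun x hx => sub_eq_zero.mp ?_⟩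
  refine (hmu.isBalanced.sub_const_mul hlam.isBalanced _).eq_zero_of_isMinimalClosedPath hmin hx₀
    ?_ x hx
  rw [div_mul_cancel₀ _ (hlam.2.1 x₀ hx₀), sub_self]
end

section
/- Property (b) of minimal closed paths: Let X be a set, h_1,…,h_r : X → ℝ fixed functions, and let p = {x_1,…,x_n} ⊆ X be a minimal closed path with associated vector λ = (λ_1,…,λ_n) of nonzero reals satisfying Σ_{j=1}^n |λ_j| = 1. Then every λ_j, j = 1,…,n, is a rational number. -/
open scoped Classical

/-!
The level-set equations have integer coefficients, and for a minimal closed path their real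
solution space is one-dimensional: a solution vanishing at one point of the path vanishes
everywhere, since otherwise its support would be a smaller closed path. Composing `λ` with a
`ℚ`-linear functional `ℝ → ℚ` that is nonzero at one of its values gives a rational solution
`ν`, so `λ = c ν` for a real `c`, and the normalisation `Σ |λ_j| = 1` forces `|c| = 1 / Σ |ν_j|`
to be rational.
-/

def LevelSumsVanish {α : Type*} {r : ℕ} (h : Fin r → α → ℝ) (p : Finset α) (ν : α → ℝ) :
    Prop :=
  ∀ (i : Fin r) (t : ℝ), ∑ x ∈ p.filter (fun x => h i x = t), ν x = 0

namespace LevelSumsVanish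

variable {α : Type*} {r : ℕ} {h : Fin r → α → ℝ} {p : Finset α} {μ ν : α → ℝ}

lemma sub_const_mul (hμ : LevelSumsVanish h p μ) (hν : LevelSumsVanish h p ν) (c : ℝ) :
    LevelSumsVanish h p (fun x => μ x - c * ν x) := by
  intro i t
  simp only [Finset.sum_sub_distrib, ← Finset.mul_sum, hμ i t, hν i t, mul_zero, sub_zero]

lemma map (hν : LevelSumsVanish h p ν) (g : ℝ →+ ℝ) : LevelSumsVanish h p (fun x => g (ν x)) := by
  intro i t
  rw [← map_sum, hν i t, map_zero]

lemma isClosedPath_filter_ne_zero (hν : LevelSumsVanish h p ν) (hne : ∃ x ∈ p, ν x ≠ 0) :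
    IsClosedPath h (p.filter (fun x => ν x ≠ 0)) := by
  obtain ⟨x, hxp, hx⟩ := hne
  refine ⟨ν, ⟨x, Finset.mem_filter.mpr ⟨hxp, hx⟩⟩, fun y hy => (Finset.mem_filter.mp hy).2, ?_⟩
  intro i t
  rw [Finset.filter_comm, Finset.sum_filter_ne_zero]
  exact hν i t

lemma exists_rat_eq_one (hν : LevelSumsVanish h p ν) {x₀ : α} (hx₀ : ν x₀ ≠ 0) :
    ∃ q : α → ℚ, LevelSumsVanish h p (fun x => q x) ∧ q x₀ = 1 := by
  obtain ⟨f, hf⟩ := Module.Projective.exists_dual_eq_one ℚ hx₀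
  exact ⟨fun x => f (ν x), hν.map ((Rat.castHom ℝ : ℚ →+* ℝ).toAddMonoidHom.comp f.toAddMonoidHom),
    hf⟩

end LevelSumsVanish

namespace IsMinimalClosedPath

variable {α : Type*} {r : ℕ} {h : Fin r → α → ℝ} {p : Finset α} {μ ν : α → ℝ}

lemma eq_zero_of_apply_eq_zero (hmin : IsMinimalClosedPath h p) (hν : LevelSumsVanish h p ν)
    {x₀ : α} (hx₀ : x₀ ∈ p) (hν₀ : ν x₀ = 0) : ∀ x ∈ p, ν x = 0 := by
  by_contra! hne
  have hssub : p.filter (fun x => ν x ≠ 0) ⊂ p :=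
    Finset.filter_ssubset.mpr ⟨x₀, hx₀, not_not.mpr hν₀⟩
  exact hmin.2 _ hssub (hν.isClosedPath_filter_ne_zero hne)

lemma eq_div_mul (hmin : IsMinimalClosedPath h p) (hμ : LevelSumsVanish h p μ)
    (hν : LevelSumsVanish h p ν) {x₀ : α} (hx₀ : x₀ ∈ p) (hν₀ : ν x₀ ≠ 0) :
    ∀ x ∈ p, μ x = μ x₀ / ν x₀ * ν x := by
  intro x hx
  have hdiff := hmin.eq_zero_of_apply_eq_zero (hμ.sub_const_mul hν (μ x₀ / ν x₀)) hx₀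
    (by rw [div_mul_cancel₀ _ hν₀, sub_self]) x hx
  linarith

end IsMinimalClosedPath

lemma Real.exists_rat_eq_of_abs_mul_ratCast_eq_one {c : ℝ} {s : ℚ} (hcs : |c| * s = 1) :
    ∃ q : ℚ, c = q := by
  have habs : |c| = ((s⁻¹ : ℚ) : ℝ) := by
    rw [Rat.cast_inv]
    exact eq_inv_of_mul_eq_one_left hcs
  rcases abs_choice c with hc | hc
  · exact ⟨s⁻¹, hc ▸ habs⟩
  · exact ⟨-s⁻¹, by rw [Rat.cast_neg, ← habs, hc, neg_neg]⟩

/-- Property (b): if the vector associated with a minimal closed path is normalized by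
`Σ |λ_j| = 1`, then all its components are rational. -/
theorem minimal_closedPath_vector_rational {X : Type*} {r : ℕ} (h : Fin r → X → ℝ)
    (p : Finset X) (hmin : IsMinimalClosedPath h p)
    (lam : X → ℝ) (hlam : ClosedPathPair h p lam)
    (hnorm : ∑ x ∈ p, |lam x| = 1) :
    ∀ x ∈ p, ∃ q : ℚ, lam x = (q : ℝ) := by
  obtain ⟨x₀, hx₀⟩ := hlam.1
  have hsums : LevelSumsVanish h p lam := hlam.2.2
  obtain ⟨ν, hν, hν₀⟩ := hsums.exists_rat_eq_one (hlam.2.1 x₀ hx₀)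
  have hprop : ∀ x ∈ p, lam x = lam x₀ * ν x := by
    intro x hx
    simpa [hν₀] using hmin.eq_div_mul hsums hν hx₀ (by simp [hν₀]) x hx
  have hsum : ∑ x ∈ p, |lam x| = |lam x₀| * ((∑ x ∈ p, |ν x| : ℚ) : ℝ) := by
    rw [Rat.cast_sum, Finset.mul_sum]
    refine Finset.sum_congr rfl fun x hx => ?_
    rw [hprop x hx, abs_mul, Rat.cast_abs]
  obtain ⟨c, hc⟩ := Real.exists_rat_eq_of_abs_mul_ratCast_eq_one (hsum ▸ hnorm)
  intro x hx
  exact ⟨c * ν x, by rw [hprop x hx, hc, Rat.cast_mul]⟩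
end

section
/- Let X be a set, h_1,…,h_r : X → ℝ fixed functions, and let {x_1,…,x_n} ⊆ X be a closed path with respect to h_1,…,h_r, i.e., there exist nonzero real numbers λ_1,…,λ_n with Σ_{j : h_i(x_j)=t} λ_j = 0 for every i = 1,…,r and every t ∈ ℝ. Then there also exist nonzero integers m_1,…,m_n such that Σ_{j : h_i(x_j)=t} m_j = 0 for every i = 1,…,r and every t ∈ ℝ. -/
open scoped Classical

/-!
The level-set conditions are linear relations with integer coefficients, so they survive any
`ℚ`-linear map `f : ℝ → ℚ`. Such an `f` can be chosen nonzero at every `λⱼ`, because the dual of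
`ℝ` over the infinite field `ℚ` is not the union of the finitely many proper subspaces
`{f | f λⱼ = 0}`. Clearing the denominators of the rational numbers `f λⱼ` then gives the
integers `mⱼ`.
-/

theorem Module.Dual.exists_forall_apply_ne_zero {K V ι : Type*} [Field K] [Infinite K]
    [AddCommGroup V] [Module K V] (s : Finset ι) (v : ι → V) (hv : ∀ i ∈ s, v i ≠ 0) :
    ∃ f : Module.Dual K V, ∀ i ∈ s, f (v i) ≠ 0 := by
  have hker_ne_top : ∀ i ∈ s, LinearMap.ker (Module.Dual.eval K V (v i)) ≠ ⊤ := by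
    intro i hi htop
    refine hv i hi ((Module.forall_dual_apply_eq_zero_iff K (v i)).mp fun φ => ?_)
    simpa using htop.ge (Submodule.mem_top (x := φ))
  have hnot_cover := Subspace.biUnion_ne_univ_of_top_notMem
    (s := s.image fun i => LinearMap.ker (Module.Dual.eval K V (v i))) (by simpa using hker_ne_top)
  obtain ⟨f, hf⟩ := Set.ne_univ_iff_exists_notMem _ |>.mp hnot_cover
  exact ⟨f, fun i hi hfi =>
    hf (Set.mem_biUnion (Finset.mem_image_of_mem _ hi) (by simpa using hfi))⟩

theorem Rat.exists_int_mul_eq_intCast {ι : Type*} (s : Finset ι) (q : ι → ℚ) :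
    ∃ d : ℤ, d ≠ 0 ∧ ∃ m : ι → ℤ, ∀ i ∈ s, (m i : ℚ) = d * q i := by
  obtain ⟨⟨d, hd⟩, hint⟩ := IsLocalization.exist_integer_multiples (nonZeroDivisors ℤ) s q
  choose! m hm using hint
  exact ⟨d, nonZeroDivisors.ne_zero hd, m, fun i hi => by simpa using hm i hi⟩

/-- A closed path always admits an associated vector with nonzero integer components. -/
theorem closedPath_integer_vector {X : Type*} {r : ℕ} (h : Fin r → X → ℝ)
    (p : Finset X) (lam : X → ℝ) (hp : ClosedPathPair h p lam) :
    ∃ m : X → ℤ, (∀ x ∈ p, m x ≠ 0) ∧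
      ∀ (i : Fin r) (t : ℝ), ∑ x ∈ p.filter (fun x => h i x = t), m x = 0 := by
  obtain ⟨-, hlam_ne, hlam_sum⟩ := hp
  obtain ⟨f, hf⟩ := Module.Dual.exists_forall_apply_ne_zero (K := ℚ) p lam hlam_ne
  obtain ⟨d, hd, m, hm⟩ := Rat.exists_int_mul_eq_intCast p fun x => f (lam x)
  refine ⟨m, fun x hx hmx => ?_, fun i t => ?_⟩
  · have h0 : (0 : ℚ) = d * f (lam x) := by rw [← hm x hx, hmx, Int.cast_zero]
    exact mul_ne_zero (Int.cast_ne_zero.mpr hd) (hf x hx) h0.symm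
  · have hsum : ((∑ x ∈ p.filter (fun x => h i x = t), m x : ℤ) : ℚ) = 0 := by
      rw [Int.cast_sum, Finset.sum_congr rfl fun x hx => hm x (Finset.mem_filter.mp hx).1,
        ← Finset.mul_sum, ← map_sum, hlam_sum i t, map_zero, mul_zero]
    exact_mod_cast hsum
end

section
/- Let a^1,…,a^r ∈ ℝ^d \ {0}, let y ∈ ℝ^d, and let b^1,…,b^r ∈ ℝ^d satisfy a^i · b^i = 0 for i = 1,…,r. For each ε = (ε_1,…,ε_r) ∈ {0,1}^r put x_ε = y + Σ_{i=1}^r ε_i b^i, and assume the 2^r points x_ε are pairwise distinct. Then the set {x_ε : ε ∈ {0,1}^r} together with the weights λ_ε = (−1)^{ε_1+⋯+ε_r} is a closed path–vector pair with respect to the functions h_i(x) = a^i · x; that is, for every i = 1,…,r and every t ∈ ℝ, Σ_{ε : a^i · x_ε = t} (−1)^{ε_1+⋯+ε_r} = 0. -/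
/-!
Flipping the `i`-th coordinate of `ε` is a fixed-point-free involution of `{0,1}^r` that
reverses the sign `(-1)^{ε_1+⋯+ε_r}` and moves `x_ε` by `±b^i`, hence leaves `a^i · x_ε`
unchanged since `a^i · b^i = 0`. So it pairs off the points of each level set of `x ↦ a^i · x`
with opposite weights.
-/

open Finset

variable {ι : Type*} [DecidableEq ι]

def flipAt (i : ι) (ε : ι → Fin 2) : ι → Fin 2 :=
  Function.update ε i (ε i).rev

@[simp]
lemma flipAt_flipAt (i : ι) (ε : ι → Fin 2) : flipAt i (flipAt i ε) = ε := by
  simp [flipAt]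

lemma flipAt_ne (i : ι) (ε : ι → Fin 2) : flipAt i ε ≠ ε := fun h => by
  have := congrFun h i
  simp only [flipAt, Function.update_self] at this
  generalize ε i = e at this
  fin_cases e <;> simp_all

lemma flipAt_apply_of_ne {i j : ι} (h : j ≠ i) (ε : ι → Fin 2) : flipAt i ε j = ε j :=
  Function.update_of_ne h _ _

lemma neg_one_pow_sum_flipAt [Fintype ι] {R : Type*} [Ring R] (i : ι) (ε : ι → Fin 2) :
    (-1 : R) ^ (∑ j, (flipAt i ε j : ℕ)) = -(-1) ^ (∑ j, (ε j : ℕ)) := by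
  have hsum : ∀ δ : ι → Fin 2, ∑ j, (δ j : ℕ) = ∑ j ∈ univ \ {i}, (δ j : ℕ) + δ i := fun δ => by
    rw [← sum_sdiff (subset_univ {i}), sum_singleton]
  have hrest : ∑ j ∈ univ \ {i}, (flipAt i ε j : ℕ) = ∑ j ∈ univ \ {i}, (ε j : ℕ) :=
    sum_congr rfl fun j hj => by
      rw [flipAt_apply_of_ne (by simpa using hj)]
  rw [hsum, hsum ε, hrest, flipAt, Function.update_self, pow_add, pow_add]
  generalize ε i = e
  fin_cases e <;> simp

lemma sum_mul_flipAt_of_eq_zero [Fintype ι] {i : ι} {v : ι → ℝ} (hv : v i = 0) (ε : ι → Fin 2) :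
    ∑ j, ((flipAt i ε j : ℕ) : ℝ) * v j = ∑ j, ((ε j : ℕ) : ℝ) * v j :=
  sum_congr rfl fun j _ => by
    by_cases h : j = i
    · simp [h, hv]
    · rw [flipAt_apply_of_ne h]

lemma sum_filter_neg_one_pow_eq_zero [Fintype ι] {R α : Type*} [Ring R] [DecidableEq α] (i : ι)
    (φ : (ι → Fin 2) → α) (hφ : ∀ ε, φ (flipAt i ε) = φ ε) (t : α) :
    ∑ ε ∈ univ.filter (fun ε => φ ε = t), (-1 : R) ^ (∑ j, (ε j : ℕ)) = 0 := by
  refine sum_involution (fun ε _ => flipAt i ε) (fun ε _ => ?_) (fun ε _ _ => flipAt_ne i ε)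
    (fun ε hε => ?_) (fun ε _ => flipAt_flipAt i ε)
  · rw [neg_one_pow_sum_flipAt, add_neg_cancel]
  · simpa [hφ] using hε

theorem cube_points_closedPath_general {d r : ℕ}
    (a : Fin r → Fin d → ℝ)
    (y : Fin d → ℝ) (b : Fin r → Fin d → ℝ)
    (hab : ∀ i, ∑ k, a i k * b i k = 0)
    (xpt : (Fin r → Fin 2) → Fin d → ℝ)
    (hxpt : ∀ ε, xpt ε = fun k => y k + ∑ i, ((ε i : ℕ) : ℝ) * b i k) :
    ∀ (i : Fin r) (t : ℝ),
      ∑ ε ∈ Finset.univ.filter (fun ε : Fin r → Fin 2 => ∑ k, a i k * xpt ε k = t),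
        (-1 : ℝ) ^ (∑ j, (ε j : ℕ)) = 0 := by
  intro i t
  have hdot : ∀ ε, ∑ k, a i k * xpt ε k
      = ∑ k, a i k * y k + ∑ j, ((ε j : ℕ) : ℝ) * ∑ k, a i k * b j k := fun ε => by
    simp only [hxpt, mul_add, sum_add_distrib, mul_sum]
    rw [sum_comm]
    simp only [mul_left_comm]
  refine sum_filter_neg_one_pow_eq_zero i (fun ε => ∑ k, a i k * xpt ε k) (fun ε => ?_) t
  rw [hdot, hdot, sum_mul_flipAt_of_eq_zero (v := fun j => ∑ k, a i k * b j k) (hab i)]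

/-- The points `x_ε = y + Σ ε_i b^i`, `ε ∈ {0,1}^r`, with weights `(−1)^{ε_1+⋯+ε_r}`,
form a closed path–vector pair with respect to the functions `x ↦ a^i · x`. -/
theorem cube_points_closedPath {d r : ℕ}
    (a : Fin r → Fin d → ℝ) (ha : ∀ i, a i ≠ 0)
    (y : Fin d → ℝ) (b : Fin r → Fin d → ℝ)
    (hab : ∀ i, ∑ k, a i k * b i k = 0)
    (xpt : (Fin r → Fin 2) → Fin d → ℝ)
    (hxpt : ∀ ε, xpt ε = fun k => y k + ∑ i, ((ε i : ℕ) : ℝ) * b i k)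
    (hinj : Function.Injective xpt) :
    ∀ (i : Fin r) (t : ℝ),
      ∑ ε ∈ Finset.univ.filter (fun ε : Fin r → Fin 2 => ∑ k, a i k * xpt ε k = t),
        (-1 : ℝ) ^ (∑ j, (ε j : ℕ)) = 0 :=
  cube_points_closedPath_general a y b hab xpt hxpt
end

section
/- NI-property characterization: Let a^1,…,a^r ∈ ℝ^d \ {0} be directions and x^1,…,x^k ∈ ℝ^d distinct points. The following are equivalent: (i) there exist α_1,…,α_k ∈ ℝ such that no function of the form f(x) = Σ_{i=1}^r g_i(a^i · x) (with arbitrary g_i : ℝ → ℝ) satisfies f(x^j) = α_j for all j = 1,…,k; (ii) there exists a nonzero vector m = (m_1,…,m_k) ∈ ℤ^k such that Σ_{j=1}^k m_j g(a^i · x^j) = 0 for every i = 1,…,r and every function g : ℝ → ℝ. -/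
/-!
Write `t i j = a^i · x^j`. Let `M` be the integer matrix whose row `(i, j₀)` is the indicator
of the level set `{j | t i j = t i j₀}`. The ridge sums `j ↦ Σ_i g_i (t i j)` are exactly the
real combinations of the rows of `M`, and `m` has property (ii) iff `M m = 0`.
If the integer `det (Mᵀ M)` vanishes, `Mᵀ M`, hence `M`, has a nonzero integer kernel vector;
otherwise `Mᵀ M` is invertible over `ℝ`, so the rows of `M` span `ℝ^k` and every `α` is
interpolable. Conversely, an `m` as in (ii) is not interpolable: pairing with `m` kills every
ridge sum, while `m · m > 0`.
-/

open Finset Matrix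

namespace Matrix

variable {m n : Type*} [Fintype m] [Fintype n] [DecidableEq n]

theorem vecMul_surjective_of_isUnit_det_transpose_mul_self {K : Type*} [Field K]
    {A : Matrix m n K} (h : IsUnit (Aᵀ * A).det) : Function.Surjective A.vecMul :=
  vecMul_surjective_iff_exists_left_inverse.mpr
    ⟨(Aᵀ * A)⁻¹ * Aᵀ, by rw [Matrix.mul_assoc, nonsing_inv_mul _ h]⟩

theorem exists_int_mulVec_eq_zero_or_vecMul_surjective {K : Type*} [Field K] [CharZero K]
    (A : Matrix m n ℤ) :
    (∃ v : n → ℤ, v ≠ 0 ∧ A *ᵥ v = 0) ∨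
      Function.Surjective (A.map (Int.cast : ℤ → K)).vecMul := by
  by_cases hdet : (Aᵀ * A).det = 0
  · obtain ⟨v, hv0, hv⟩ := exists_mulVec_eq_zero_iff.mpr hdet
    rw [← conjTranspose_eq_transpose_of_trivial, conjTranspose_mul_self_mulVec_eq_zero] at hv
    exact Or.inl ⟨v, hv0, hv⟩
  · refine Or.inr (vecMul_surjective_of_isUnit_det_transpose_mul_self ?_)
    have hcast := (Int.castRingHom K).map_det (Aᵀ * A)
    rw [RingHom.mapMatrix_apply, Matrix.map_mul, transpose_map, Int.coe_castRingHom] at hcast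
    rw [isUnit_iff_ne_zero, ← hcast]
    exact Int.cast_ne_zero.mpr hdet

end Matrix

theorem Finset.sum_mul_comp_eq_zero_of_sum_fiber_eq_zero_s15 {κ β R : Type*} [Fintype κ]
    [NonUnitalNonAssocSemiring R] [DecidableEq β] {t : κ → β} {m : κ → R}
    (h : ∀ j, ∑ j' with t j' = t j, m j' = 0) (g : β → R) :
    ∑ j, m j * g (t j) = 0 := by
  have hfiber : ∀ j, ∑ j' with t j' = t j, m j' * g (t j') = 0 := fun j => by
    rw [sum_congr rfl fun j' hj' => by rw [(mem_filter.mp hj').2], ← sum_mul, h, zero_mul]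
  rw [← sum_image' (g := t) (f := fun _ => (0 : R)) _ fun j _ => (hfiber j).symm,
    sum_const_zero]

section LevelSets

variable {ι κ β : Type*} [Fintype κ] [DecidableEq β]

def levelSetMatrix (t : ι → κ → β) : Matrix (ι × κ) κ ℤ :=
  fun p j => if t p.1 j = t p.1 p.2 then 1 else 0

theorem levelSetMatrix_mulVec_apply (t : ι → κ → β) (v : κ → ℤ) (i : ι) (j : κ) :
    (levelSetMatrix t *ᵥ v) (i, j) = ∑ j' with t i j' = t i j, v j' := by
  simp [levelSetMatrix, mulVec, dotProduct, sum_filter]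

theorem sum_mul_comp_eq_zero_of_levelSetMatrix_mulVec_eq_zero {t : ι → κ → β} {v : κ → ℤ}
    (hv : levelSetMatrix t *ᵥ v = 0) (i : ι) (g : β → ℝ) :
    ∑ j, (v j : ℝ) * g (t i j) = 0 :=
  sum_mul_comp_eq_zero_of_sum_fiber_eq_zero_s15 (fun j => by
    exact_mod_cast (levelSetMatrix_mulVec_apply t v i j).symm.trans (congrFun hv (i, j))) g

theorem exists_sum_comp_eq_vecMul_levelSetMatrix [Fintype ι] {R : Type*} [Ring R]
    (t : ι → κ → β) (c : ι × κ → R) :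
    ∃ g : ι → β → R, ∀ j, ∑ i, g i (t i j) = (c ᵥ* (levelSetMatrix t).map Int.cast) j := by
  refine ⟨fun i s => ∑ j₀ with t i j₀ = s, c (i, j₀), fun j => ?_⟩
  simp [levelSetMatrix, vecMul, dotProduct, Fintype.sum_prod_type, sum_filter, eq_comm]

end LevelSets

theorem not_exists_sum_comp_eq_of_sum_mul_comp_eq_zero {ι κ β R : Type*} [Fintype ι]
    [Fintype κ] [CommRing R] [LinearOrder R] [IsStrictOrderedRing R] {t : ι → κ → β}
    {v : κ → R} (hv0 : v ≠ 0) (hv : ∀ i (g : β → R), ∑ j, v j * g (t i j) = 0) :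
    ¬ ∃ g : ι → β → R, ∀ j, ∑ i, g i (t i j) = v j := by
  rintro ⟨g, hg⟩
  refine hv0 (dotProduct_self_eq_zero.mp ?_)
  calc v ⬝ᵥ v = ∑ j, v j * ∑ i, g i (t i j) := by simp only [dotProduct, hg]
    _ = ∑ i, ∑ j, v j * g i (t i j) := by simp only [mul_sum]; exact sum_comm
    _ = 0 := sum_eq_zero fun i _ => hv i (g i)

theorem NI_property_iff_integer_vector_general {d r k : ℕ}
    (a : Fin r → Fin d → ℝ)
    (x : Fin k → Fin d → ℝ) :
    (∃ α : Fin k → ℝ, ¬ ∃ g : Fin r → ℝ → ℝ,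
        ∀ j, ∑ i, g i (∑ l, a i l * x j l) = α j) ↔
      ∃ m : Fin k → ℤ, m ≠ 0 ∧ ∀ (i : Fin r) (g : ℝ → ℝ),
        ∑ j, (m j : ℝ) * g (∑ l, a i l * x j l) = 0 := by
  set t : Fin r → Fin k → ℝ := fun i j => ∑ l, a i l * x j l
  constructor
  · rintro ⟨α, hα⟩
    rcases (levelSetMatrix t).exists_int_mulVec_eq_zero_or_vecMul_surjective (K := ℝ) with
      ⟨m, hm0, hm⟩ | hsurj
    · exact ⟨m, hm0, sum_mul_comp_eq_zero_of_levelSetMatrix_mulVec_eq_zero hm⟩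
    · obtain ⟨c, rfl⟩ := hsurj α
      exact (hα (exists_sum_comp_eq_vecMul_levelSetMatrix t c)).elim
  · rintro ⟨m, hm0, hm⟩
    have hm0' : (fun j => (m j : ℝ)) ≠ 0 := fun h =>
      hm0 (funext fun j => Int.cast_eq_zero.mp (congrFun h j))
    exact ⟨_, not_exists_sum_comp_eq_of_sum_mul_comp_eq_zero hm0' hm⟩

/-- NI-property characterization: the points `x^1,…,x^k` admit non-interpolable data with
respect to sums of ridge functions in the directions `a^1,…,a^r` iff there is a nonzero
integer vector `m` with `Σ_j m_j g(a^i · x^j) = 0` for all `i` and all `g : ℝ → ℝ`. -/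
theorem NI_property_iff_integer_vector {d r k : ℕ}
    (a : Fin r → Fin d → ℝ) (ha : ∀ i, a i ≠ 0)
    (x : Fin k → Fin d → ℝ) (hx : Function.Injective x) :
    (∃ α : Fin k → ℝ, ¬ ∃ g : Fin r → ℝ → ℝ,
        ∀ j, ∑ i, g i (∑ l, a i l * x j l) = α j) ↔
      ∃ m : Fin k → ℤ, m ≠ 0 ∧ ∀ (i : Fin r) (g : ℝ → ℝ),
        ∑ j, (m j : ℝ) * g (∑ l, a i l * x j l) = 0 :=
  NI_property_iff_integer_vector_general a x
end

section
/- Let a^1, a^2 ∈ ℝ^2 be linearly independent vectors, let v ∈ ℝ^2 \ {0} satisfy a^1 · v ≠ 0 and a^2 · v ≠ 0, and let L_1, L_2 be two distinct parallel lines in ℝ^2 with direction vector v (i.e., L_k = {c_k + t v : t ∈ ℝ} with c_1 − c_2 not a multiple of v). Put X = L_1 ∪ L_2. Then X has no closed paths with respect to the functions h_1(x) = a^1 · x, h_2(x) = a^2 · x, and consequently every function f : X → ℝ can be written as f(x) = g_1(a^1 · x) + g_2(a^2 · x) for some g_1, g_2 : ℝ → ℝ. -/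
open scoped Classical

/-!
Along each line `c + t • v` both functionals are injective in `t`, so a level set of `φ` or `ψ`
meets each line at most once. In a closed path every point shares its `φ`-level set and its
`ψ`-level set with another point of the path, which must therefore lie on the other line.
Passing to the other line along a level set of `φ` and coming back along one of `ψ` moves the
parameter by a fixed shift `δ`, nonzero because the lines are distinct and `ker φ ∩ ker ψ = 0`;
a finite set of parameters cannot be invariant under `t ↦ t + δ`.

For the representation, writing `g₁, g₂` in terms of the parameter on the first line reduces the
condition on the second line to the difference equation `G (s + δ) = G s + F s`, which is solved
independently on each orbit of `s ↦ s + δ`.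
-/

theorem ClosedPathPair.exists_mem_ne_apply_eq {α : Type*} {r : ℕ} {h : Fin r → α → ℝ}
    {p : Finset α} {lam : α → ℝ} (hp : ClosedPathPair h p lam) (i : Fin r) {x : α}
    (hx : x ∈ p) : ∃ y ∈ p, y ≠ x ∧ h i y = h i x := by
  by_contra! hlonely
  have hfilter : p.filter (fun y => h i y = h i x) = {x} := by
    ext y
    simp only [Finset.mem_filter, Finset.mem_singleton]
    refine ⟨fun ⟨hy, hyx⟩ => by_contra fun hne => hlonely y hy hne hyx, ?_⟩
    rintro rfl
    exact ⟨hx, rfl⟩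
  have := hp.2.2 i (h i x)
  rw [hfilter, Finset.sum_singleton] at this
  exact hp.2.1 x hx this

theorem Set.Finite.eq_zero_of_forall_add_mem {G : Type*} [AddCommGroup G] [IsAddTorsionFree G]
    {S : Set G} {δ : G} (hS : S.Finite) (hne : S.Nonempty) (hadd : ∀ t ∈ S, t + δ ∈ S) :
    δ = 0 := by
  obtain ⟨t, ht⟩ := hne
  have horbit : Set.range (fun n : ℕ => t + n • δ) ⊆ S := by
    rintro _ ⟨n, rfl⟩
    induction n with
    | zero => simpa
    | succ n ih => simpa [succ_nsmul, add_assoc] using hadd _ ih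
  by_contra hδ
  exact (infinite_range_add_nsmul_iff t δ).2 hδ (hS.subset horbit)

theorem exists_forall_int_add_one_eq_add {M : Type*} [AddCommGroup M] (F : ℤ → M) :
    ∃ D : ℤ → M, ∀ n, D (n + 1) = D n + F n := by
  refine ⟨fun n => ∑ k ∈ Finset.Ico 0 n, F k - ∑ k ∈ Finset.Ico n 0, F k, fun n => ?_⟩
  dsimp only
  rcases le_or_gt 0 n with hn | hn
  · rw [← Finset.insert_Ico_right_eq_Ico_add_one hn, Finset.sum_insert (by simp),
      Finset.Ico_eq_empty_of_le (by omega : (0 : ℤ) ≤ n + 1),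
      Finset.Ico_eq_empty_of_le (by omega : (0 : ℤ) ≤ n)]
    abel
  · rw [← Finset.insert_Ico_add_one_left_eq_Ico hn, Finset.sum_insert (by simp),
      Finset.Ico_eq_empty_of_le (by omega : n + 1 ≤ 0),
      Finset.Ico_eq_empty_of_le (by omega : n ≤ 0)]
    abel

theorem exists_forall_add_eq_add {M : Type*} [AddCommGroup M] (F : ℝ → M) {δ : ℝ} (hδ : δ ≠ 0) :
    ∃ G : ℝ → M, ∀ s, G (s + δ) = G s + F s := by
  -- `Int.fract (s / δ)` labels the orbit of `s` under `· + δ`, and `⌊s / δ⌋` its place on it.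
  choose D hD using fun b : ℝ => exists_forall_int_add_one_eq_add fun n => F ((b + n) * δ)
  refine ⟨fun s => D (Int.fract (s / δ)) ⌊s / δ⌋, fun s => ?_⟩
  have hshift : (s + δ) / δ = s / δ + 1 := by rw [add_div, div_self hδ]
  simp only [hshift, Int.fract_add_one, Int.floor_add_one, hD, Int.fract_add_floor,
    div_mul_cancel₀ s hδ]

theorem LinearIndependent.eq_zero_of_forall_dotProduct_eq_zero {K n ι : Type*} [Field K]
    [Fintype n] [DecidableEq n] [Fintype ι] {a : ι → n → K} (ha : LinearIndependent K a)
    (hcard : Fintype.card ι = Fintype.card n) {w : n → K} (hw : ∀ i, a i ⬝ᵥ w = 0) : w = 0 := by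
  have hspan := ha.span_eq_top_of_card_eq_finrank' (by simpa using hcard)
  have hzero : dotProductEquiv K n w = 0 :=
    LinearMap.ext_on_range hspan fun i => by simpa [dotProduct_comm] using hw i
  simpa using hzero

section TwoParallelLines

variable {V : Type*} [AddCommGroup V] [Module ℝ V]

noncomputable def lineShift (φ : Module.Dual ℝ V) (v c c' : V) : ℝ := (φ c - φ c') / φ v

variable {φ ψ : Module.Dual ℝ V} {v c c' c₁ c₂ : V}

theorem apply_add_smul_eq_iff (hφ : φ v ≠ 0) {s t : ℝ} :
    φ (c' + s • v) = φ (c + t • v) ↔ s = t + lineShift φ v c c' := by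
  simp only [lineShift, map_add, map_smul, smul_eq_mul]
  constructor
  · intro h
    field_simp
    linarith
  · rintro rfl
    field_simp
    ring

theorem sub_div_apply_add_smul (hφ : φ v ≠ 0) (s : ℝ) :
    (φ (c' + s • v) - φ c) / φ v = s - lineShift φ v c c' := by
  simp only [lineShift, map_add, map_smul, smul_eq_mul]
  field_simp
  ring

theorem lineShift_self : lineShift φ v c c = 0 := by simp [lineShift]

theorem lineShift_swap : lineShift φ v c' c = -lineShift φ v c c' := by
  simp only [lineShift, ← neg_div, neg_sub]

theorem lineShift_ne_lineShift (hφψ : ∀ w, φ w = 0 → ψ w = 0 → w = 0)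
    (hc : ∀ t : ℝ, c₁ - c₂ ≠ t • v) (hφ : φ v ≠ 0) (hψ : ψ v ≠ 0) :
    lineShift φ v c₁ c₂ ≠ lineShift ψ v c₁ c₂ := by
  intro h
  refine hc (lineShift φ v c₁ c₂) (sub_eq_zero.1 (hφψ _ ?_ ?_))
  · simp only [lineShift, map_sub, map_smul, smul_eq_mul]
    field_simp
    ring
  · rw [h]
    simp only [lineShift, map_sub, map_smul, smul_eq_mul]
    field_simp
    ring

theorem add_smul_lineShift_mem {p : Finset V}
    (hφ : φ v ≠ 0) (hp : ↑p ⊆ {z | ∃ t : ℝ, z = c + t • v} ∪ {z | ∃ t : ℝ, z = c' + t • v})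
    (hpartner : ∀ x ∈ p, ∃ y ∈ p, y ≠ x ∧ φ y = φ x) {t : ℝ} (ht : c + t • v ∈ p) :
    c' + (t + lineShift φ v c c') • v ∈ p := by
  obtain ⟨y, hy, hne, hφy⟩ := hpartner _ ht
  rcases hp hy with ⟨s, rfl⟩ | ⟨s, rfl⟩
  · rw [apply_add_smul_eq_iff hφ, lineShift_self, add_zero] at hφy
    exact absurd (by rw [hφy]) hne
  · rw [apply_add_smul_eq_iff hφ] at hφy
    rwa [← hφy]

theorem not_isClosedPath_of_subset_parallel_lines (hφ : φ v ≠ 0) (hψ : ψ v ≠ 0)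
    (hshift : lineShift φ v c₁ c₂ ≠ lineShift ψ v c₁ c₂) {p : Finset V}
    (hp : ↑p ⊆ {z | ∃ t : ℝ, z = c₁ + t • v} ∪ {z | ∃ t : ℝ, z = c₂ + t • v}) :
    ¬ IsClosedPath ![⇑φ, ⇑ψ] p := by
  rintro ⟨lam, hpath⟩
  have hφpartner : ∀ x ∈ p, ∃ y ∈ p, y ≠ x ∧ φ y = φ x :=
    fun x hx => hpath.exists_mem_ne_apply_eq 0 hx
  have hψpartner : ∀ x ∈ p, ∃ y ∈ p, y ≠ x ∧ ψ y = ψ x :=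
    fun x hx => hpath.exists_mem_ne_apply_eq 1 hx
  have hp' := hp.trans (Set.union_comm _ _).subset
  have hv : v ≠ 0 := fun h => hφ (by simp [h])
  have hfinite : {t : ℝ | c₁ + t • v ∈ p}.Finite :=
    p.finite_toSet.preimage ((add_right_injective c₁).comp (smul_left_injective ℝ hv)).injOn
  have hnonempty : {t : ℝ | c₁ + t • v ∈ p}.Nonempty := by
    obtain ⟨x, hx⟩ := hpath.1
    rcases hp hx with ⟨t, rfl⟩ | ⟨s, rfl⟩
    · exact ⟨t, hx⟩
    · exact ⟨_, add_smul_lineShift_mem hφ hp' hφpartner hx⟩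
  have hadd : ∀ t ∈ {t : ℝ | c₁ + t • v ∈ p},
      t + (lineShift φ v c₁ c₂ - lineShift ψ v c₁ c₂) ∈ {t : ℝ | c₁ + t • v ∈ p} := by
    intro t ht
    have := add_smul_lineShift_mem hψ hp' hψpartner (add_smul_lineShift_mem hφ hp hφpartner ht)
    rwa [lineShift_swap (φ := ψ), ← sub_eq_add_neg, add_sub_assoc] at this
  exact hshift (sub_eq_zero.1 (hfinite.eq_zero_of_forall_add_mem hnonempty hadd))

theorem exists_eq_add_comp_of_parallel_lines (hφ : φ v ≠ 0) (hψ : ψ v ≠ 0)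
    (hshift : lineShift φ v c₁ c₂ ≠ lineShift ψ v c₁ c₂) (F : V → ℝ) :
    ∃ g₁ g₂ : ℝ → ℝ, ∀ x ∈ {z | ∃ t : ℝ, z = c₁ + t • v} ∪ {z | ∃ t : ℝ, z = c₂ + t • v},
      F x = g₁ (φ x) + g₂ (ψ x) := by
  obtain ⟨G, hG⟩ := exists_forall_add_eq_add
    (fun r => F (c₂ + (r + lineShift φ v c₁ c₂) • v) - F (c₁ + r • v)) (sub_ne_zero.2 hshift)
  -- `(u - φ c₁) / φ v` is the parameter of the point of the first line where `φ` equals `u`.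
  refine ⟨fun u => F (c₁ + ((u - φ c₁) / φ v) • v) - G ((u - φ c₁) / φ v),
    fun u => G ((u - ψ c₁) / ψ v), ?_⟩
  rintro x (⟨t, rfl⟩ | ⟨s, rfl⟩)
  · simp only [sub_div_apply_add_smul hφ, sub_div_apply_add_smul hψ, lineShift_self, sub_zero,
      sub_add_cancel]
  · simp only [sub_div_apply_add_smul hφ, sub_div_apply_add_smul hψ]
    rw [show s - lineShift ψ v c₁ c₂ =
      s - lineShift φ v c₁ c₂ + (lineShift φ v c₁ c₂ - lineShift ψ v c₁ c₂) by ring, hG,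
      sub_add_cancel]
    abel

end TwoParallelLines

theorem two_parallel_lines_no_closedPath_general
    (a1 a2 : Fin 2 → ℝ) (hind : LinearIndependent ℝ ![a1, a2])
    (v : Fin 2 → ℝ)
    (hv1 : ∑ k, a1 k * v k ≠ 0) (hv2 : ∑ k, a2 k * v k ≠ 0)
    (c1 c2 : Fin 2 → ℝ) (hc : ∀ t : ℝ, c1 - c2 ≠ t • v)
    (X : Set (Fin 2 → ℝ))
    (hX : X = {z | ∃ t : ℝ, z = c1 + t • v} ∪ {z | ∃ t : ℝ, z = c2 + t • v}) :
    (∀ p : Finset (Fin 2 → ℝ), ↑p ⊆ X →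
      ¬ IsClosedPath ![fun z => ∑ k, a1 k * z k, fun z => ∑ k, a2 k * z k] p) ∧
    ∀ f : X → ℝ, ∃ g1 g2 : ℝ → ℝ, ∀ x : X,
      f x = g1 (∑ k, a1 k * (x : Fin 2 → ℝ) k) + g2 (∑ k, a2 k * (x : Fin 2 → ℝ) k) := by
  subst hX
  have hφ : dotProductEquiv ℝ (Fin 2) a1 v ≠ 0 := hv1
  have hψ : dotProductEquiv ℝ (Fin 2) a2 v ≠ 0 := hv2
  have hshift := lineShift_ne_lineShift
    (fun w h1 h2 => hind.eq_zero_of_forall_dotProduct_eq_zero rfl (Fin.forall_fin_two.2 ⟨h1, h2⟩))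
    hc hφ hψ
  refine ⟨fun p hp => not_isClosedPath_of_subset_parallel_lines hφ hψ hshift hp, fun f => ?_⟩
  obtain ⟨g1, g2, hg⟩ :=
    exists_eq_add_comp_of_parallel_lines hφ hψ hshift (Function.extend Subtype.val f 0)
  refine ⟨g1, g2, fun x => ?_⟩
  rw [← Subtype.val_injective.extend_apply f 0 x]
  exact hg x x.2

/-- Two parallel lines in `ℝ²`, not perpendicular to either of the two given directions,
contain no closed paths; hence every function on their union is a sum of two ridge
functions. -/
theorem two_parallel_lines_no_closedPath
    (a1 a2 : Fin 2 → ℝ) (hind : LinearIndependent ℝ ![a1, a2])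
    (v : Fin 2 → ℝ) (hv : v ≠ 0)
    (hv1 : ∑ k, a1 k * v k ≠ 0) (hv2 : ∑ k, a2 k * v k ≠ 0)
    (c1 c2 : Fin 2 → ℝ) (hc : ∀ t : ℝ, c1 - c2 ≠ t • v)
    (X : Set (Fin 2 → ℝ))
    (hX : X = {z | ∃ t : ℝ, z = c1 + t • v} ∪ {z | ∃ t : ℝ, z = c2 + t • v}) :
    (∀ p : Finset (Fin 2 → ℝ), ↑p ⊆ X →
      ¬ IsClosedPath ![fun z => ∑ k, a1 k * z k, fun z => ∑ k, a2 k * z k] p) ∧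
    ∀ f : X → ℝ, ∃ g1 g2 : ℝ → ℝ, ∀ x : X,
      f x = g1 (∑ k, a1 k * (x : Fin 2 → ℝ) k) + g2 (∑ k, a2 k * (x : Fin 2 → ℝ) k) :=
  two_parallel_lines_no_closedPath_general a1 a2 hind v hv1 hv2 c1 c2 hc X hX
end

section
/- Let X be a set and h_1,…,h_r : X → ℝ fixed functions such that for every x ∈ X there exists an index i ∈ {1,…,r} with {y ∈ X : h_i(y) = h_i(x)} = {x} (i.e., at least one of the level sets of the h_i through x meets X only at x). Then X has no closed paths with respect to h_1,…,h_r, and consequently every function f : X → ℝ can be written as f(x) = Σ_{i=1}^r g_i(h_i(x)) for some g_1,…,g_r : ℝ → ℝ. -/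
open scoped Classical

/-!
A closed path cannot contain a point `x` whose level set under some `h i` is `{x}`: the
weights over that level set reduce to the single nonzero weight of `x`. For the
representation, pick for each `x` such an index `ind x`; on the points with `ind x = i`
the function `h i` is injective, so `f` extends along it to `g i`, and `g i` vanishes on
every other value that `h i` takes on `X`.
-/

theorem ClosedPathPair.exists_ne_mem_level {α : Type*} {r : ℕ} {h : Fin r → α → ℝ}
    {p : Finset α} {lam : α → ℝ} (hp : ClosedPathPair h p lam) {x : α} (hx : x ∈ p)
    (i : Fin r) : ∃ y ∈ p, y ≠ x ∧ h i y = h i x := by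
  by_contra! hiso
  have hlevel : p.filter (fun y => h i y = h i x) = {x} := by
    ext y
    simp only [Finset.mem_filter, Finset.mem_singleton]
    refine ⟨fun ⟨hy, hyx⟩ => ?_, by rintro rfl; exact ⟨hx, rfl⟩⟩
    exact by_contra fun hne => hiso y hy hne hyx
  have hsum := hp.2.2 i (h i x)
  rw [hlevel, Finset.sum_singleton] at hsum
  exact hp.2.1 x hx hsum

theorem exists_sum_comp_of_separating {X ι γ M : Type*} [Fintype ι] [AddCommMonoid M]
    (h : ι → X → γ) (ind : X → ι) (hind : ∀ x y, h (ind x) y = h (ind x) x → y = x)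
    (f : X → M) : ∃ g : ι → γ → M, ∀ x, f x = ∑ i, g i (h i x) := by
  let S : ι → Type _ := fun i => {x // ind x = i}
  have hinj : ∀ i, Function.Injective (fun x : S i => h i x.1) := by
    rintro i ⟨x, rfl⟩ ⟨y, hy⟩ hxy
    exact Subtype.ext (hind x y hxy.symm).symm
  refine ⟨fun i => Function.extend (fun x : S i => h i x.1) (fun x => f x.1) 0, fun x => ?_⟩
  rw [Finset.sum_eq_single (ind x)]
  · exact ((hinj (ind x)).extend_apply (fun y : S (ind x) => f y.1) 0 ⟨x, rfl⟩).symm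
  · intro i _ hi
    refine Function.extend_apply' _ _ _ ?_
    rintro ⟨⟨y, rfl⟩, hyx⟩
    exact hi (congrArg ind (hind y x hyx.symm).symm)
  · exact fun hnot => absurd (Finset.mem_univ _) hnot

/-- Example (4), abstract form: if through every point of `X` at least one level set of
some `h_i` meets `X` only in that point, then `X` has no closed paths and every function
on `X` is a sum `Σ g_i ∘ h_i`. -/
theorem no_closedPath_of_separating_level_sets {X : Type*} {r : ℕ} (h : Fin r → X → ℝ)
    (hsep : ∀ x : X, ∃ i : Fin r, ∀ y : X, h i y = h i x → y = x) :
    (∀ p : Finset X, ¬ IsClosedPath h p) ∧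
    ∀ f : X → ℝ, ∃ g : Fin r → ℝ → ℝ, ∀ x, f x = ∑ i, g i (h i x) := by
  choose ind hind using hsep
  refine ⟨?_, exists_sum_comp_of_separating h ind hind⟩
  rintro p ⟨lam, hlam⟩
  obtain ⟨x, hx⟩ := hlam.1
  obtain ⟨y, -, hyx, hy⟩ := hlam.exists_ne_mem_level hx (ind x)
  exact hyx (hind x y hy)
end
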